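/- arXiv:2007.02922 — 2 statements merged into one kernel-verified Lean document; each statement's English description precedes it below -/
import Mathlib

section
/- For all natural numbers k, ℓ, m there exists n such that for every coloring c : (Fin n)^k → Fin ℓ there exist subsets Y₀, …, Y_{k−1} of Fin n, each of cardinality m, such that c is constant on the product Y₀ × ⋯ × Y_{k−1}. -/
/-- Product Ramsey (Gallai–Witt style): for all `k, l, m` there exists `n`
such that every coloring `c : (Fin n)^k → Fin l` admits sets
`Y 0, …, Y (k-1) ⊆ Fin n`, each of size `m`, with `c` constant on their
product. -/
theorem product_ramsey (k l m : ℕ) :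
    ∃ n : ℕ, ∀ c : (Fin k → Fin n) → Fin l,
      ∃ Y : Fin k → Finset (Fin n),
        (∀ i, (Y i).card = m) ∧
        ∀ a b : Fin k → Fin n, (∀ i, a i ∈ Y i) → (∀ i, b i ∈ Y i) →
          c a = c b := by
  induction k with
  | zero =>
    refine ⟨0, fun c => ⟨fun i => i.elim0, fun i => i.elim0, fun a b _ _ => ?_⟩⟩
    congr 1
    exact Subsingleton.elim a b
  | succ k ih =>
    obtain ⟨n', hn'⟩ := ih
    set M := Fintype.card ((Fin k → Fin n') → Fin l) with hM
    refine ⟨n' + (M * m + 1), fun c => ?_⟩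
    have h' : n' ≤ n' + (M * m + 1) := Nat.le_add_right _ _
    set g : Fin (n' + (M * m + 1)) → ((Fin k → Fin n') → Fin l) :=
      fun x v => c (Fin.cons x (fun i => Fin.castLE h' (v i))) with hg
    obtain ⟨f₀, hf₀⟩ := Fintype.exists_lt_card_fiber_of_mul_lt_card g
      (show Fintype.card _ * m < Fintype.card (Fin (n' + (M * m + 1))) by
        simp only [Fintype.card_fin, ← hM]; omega)
    obtain ⟨Y0, hY0sub, hY0card⟩ := Finset.exists_subset_card_eq hf₀.le
    obtain ⟨Y', hY'card, hY'const⟩ := hn' f₀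
    have key : ∀ x ∈ Y0, g x = f₀ := fun x hx => (Finset.mem_filter.mp (hY0sub hx)).2
    refine ⟨Fin.cons Y0 (fun i => (Y' i).map ⟨Fin.castLE h', Fin.castLE_injective _⟩),
      ?_, ?_⟩
    · intro i
      induction i using Fin.cases with
      | zero => simpa using hY0card
      | succ i => simp [hY'card]
    · intro a b ha hb
      have ha0 : a 0 ∈ Y0 := by simpa using ha 0
      have hb0 : b 0 ∈ Y0 := by simpa using hb 0
      have haS : ∀ i : Fin k, ∃ w ∈ Y' i, Fin.castLE h' w = a i.succ := by
        intro i
        have := ha i.succ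
        simpa [Finset.mem_map] using this
      have hbS : ∀ i : Fin k, ∃ w ∈ Y' i, Fin.castLE h' w = b i.succ := by
        intro i
        have := hb i.succ
        simpa [Finset.mem_map] using this
      choose va hva hva' using haS
      choose vb hvb hvb' using hbS
      have hca : c a = f₀ va := by
        rw [← key (a 0) ha0]
        show c a = c (Fin.cons (a 0) fun i => Fin.castLE h' (va i))
        rw [(funext hva' : _ = Fin.tail a), Fin.cons_self_tail]
      have hcb : c b = f₀ vb := by
        rw [← key (b 0) hb0]
        show c b = c (Fin.cons (b 0) fun i => Fin.castLE h' (vb i))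
        rw [(funext hvb' : _ = Fin.tail b), Fin.cons_self_tail]
      rw [hca, hcb]
      exact hY'const va vb hva hvb
end

section
/- Fix m ≥ 1 and n ≥ 1, and let X = (Fin n)^(m+1). For each i < m define the relation <_{2i} on X by: a <_{2i} b iff a_i < b_i, or a_i = b_i and a_{j₀} < b_{j₀} where j₀ is the least index j with a_j ≠ b_j; and define <_{2i+1} by: a <_{2i+1} b iff a_i > b_i, or a_i = b_i and a_{j₀} < b_{j₀} with j₀ as above. Then each of <_{2i} and <_{2i+1} is a strict linear order on X, and for all a, b ∈ X: a_i = b_i if and only if (a <_{2i} b ↔ a <_{2i+1} b). -/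
section Lex
variable {m n : ℕ}

private def MyLex (a b : Fin (m + 1) → Fin n) : Prop :=
  ∃ j, (∀ j', j' < j → a j' = b j') ∧ a j < b j

private lemma myLex_irrefl (a : Fin (m + 1) → Fin n) : ¬ MyLex a a := by
  rintro ⟨j, -, hj⟩; exact lt_irrefl _ hj

private lemma myLex_asymm {a b : Fin (m + 1) → Fin n} (h : MyLex a b) : ¬ MyLex b a := by
  rintro ⟨k, hk, hk'⟩
  obtain ⟨j, hj, hj'⟩ := h
  rcases lt_trichotomy j k with h1 | rfl | h1
  · exact absurd (hk j h1) (ne_of_lt hj').symm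
  · exact absurd (hj'.trans hk') (lt_irrefl _)
  · exact absurd (hj k h1).symm (ne_of_lt hk')

private lemma myLex_trans {a b c : Fin (m + 1) → Fin n}
    (h1 : MyLex a b) (h2 : MyLex b c) : MyLex a c := by
  obtain ⟨j, hj, hj'⟩ := h1
  obtain ⟨k, hk, hk'⟩ := h2
  rcases lt_trichotomy j k with h | rfl | h
  · exact ⟨j, fun j' hj'' => (hj j' hj'').trans (hk j' (hj''.trans h)),
      hj'.trans_eq (hk j h)⟩
  · exact ⟨j, fun j' hj'' => (hj j' hj'').trans (hk j' hj''), hj'.trans hk'⟩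
  · exact ⟨k, fun j' hj'' => (hj j' (hj''.trans h)).trans (hk j' hj''),
      (hj k h).symm ▸ hk'⟩

private lemma myLex_total {a b : Fin (m + 1) → Fin n} (h : a ≠ b) :
    MyLex a b ∨ MyLex b a := by
  have hne : {j | a j ≠ b j}.Nonempty := by
    rw [Function.ne_iff] at h; exact h
  obtain ⟨j, hj, hmin⟩ := wellFounded_lt.has_min _ hne
  have hpre : ∀ j', j' < j → a j' = b j' := fun j' hj' => by
    by_contra hc; exact hmin j' hc hj'
  rcases lt_or_gt_of_ne hj with h | h
  · exact Or.inl ⟨j, hpre, h⟩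
  · exact Or.inr ⟨j, fun j' hj' => (hpre j' hj').symm, h⟩

end Lex


/-- The relation `<_{2i}` on `X = (Fin n)^(m+1)`: `a <_{2i} b` iff
`a i < b i`, or `a i = b i` and `a j₀ < b j₀` where `j₀` is the least index
at which `a` and `b` differ. -/
def LtEven (m n : ℕ) (i : Fin m) (a b : Fin (m + 1) → Fin n) : Prop :=
  a i.castSucc < b i.castSucc ∨
    (a i.castSucc = b i.castSucc ∧
      ∃ j, (∀ j', j' < j → a j' = b j') ∧ a j < b j)

/-- The relation `<_{2i+1}` on `X = (Fin n)^(m+1)`: `a <_{2i+1} b` iff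
`a i > b i`, or `a i = b i` and `a j₀ < b j₀` where `j₀` is the least index
at which `a` and `b` differ. -/
def LtOdd (m n : ℕ) (i : Fin m) (a b : Fin (m + 1) → Fin n) : Prop :=
  b i.castSucc < a i.castSucc ∨
    (a i.castSucc = b i.castSucc ∧
      ∃ j, (∀ j', j' < j → a j' = b j') ∧ a j < b j)

/-- For `m, n ≥ 1` and `i < m`, the relations `<_{2i}` and `<_{2i+1}` are
strict linear orders on `(Fin n)^(m+1)` (irreflexive, transitive, and
trichotomous), and `a i = b i` iff (`a <_{2i} b ↔ a <_{2i+1} b`). -/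
theorem ltEven_ltOdd_linear_orders (m n : ℕ) (hm : 1 ≤ m) (hn : 1 ≤ n)
    (i : Fin m) :
    (∀ a, ¬ LtEven m n i a a) ∧
    (∀ a b c, LtEven m n i a b → LtEven m n i b c → LtEven m n i a c) ∧
    (∀ a b, a ≠ b → (LtEven m n i a b ↔ ¬ LtEven m n i b a)) ∧
    (∀ a, ¬ LtOdd m n i a a) ∧
    (∀ a b c, LtOdd m n i a b → LtOdd m n i b c → LtOdd m n i a c) ∧
    (∀ a b, a ≠ b → (LtOdd m n i a b ↔ ¬ LtOdd m n i b a)) ∧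
    (∀ a b, a i.castSucc = b i.castSucc ↔
      (LtEven m n i a b ↔ LtOdd m n i a b)) := by
  set I := i.castSucc
  have evAsymm : ∀ a b, LtEven m n i a b → ¬ LtEven m n i b a := by
    rintro a b (h | ⟨he, hl⟩) (h' | ⟨he', hl'⟩)
    · exact absurd (h.trans h') (lt_irrefl _)
    · exact absurd h (he' ▸ lt_irrefl _)
    · exact absurd h' (he ▸ lt_irrefl _)
    · exact myLex_asymm hl hl'
  have odAsymm : ∀ a b, LtOdd m n i a b → ¬ LtOdd m n i b a := by
    rintro a b (h | ⟨he, hl⟩) (h' | ⟨he', hl'⟩)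
    · exact absurd (h.trans h') (lt_irrefl _)
    · exact absurd h (he' ▸ lt_irrefl _)
    · exact absurd h' (he ▸ lt_irrefl _)
    · exact myLex_asymm hl hl'
  refine ⟨fun a h => evAsymm a a h h, ?_, ?_, fun a h => odAsymm a a h h, ?_, ?_, ?_⟩
  · rintro a b c (h | ⟨he, hl⟩) (h' | ⟨he', hl'⟩)
    · exact Or.inl (h.trans h')
    · exact Or.inl (he' ▸ h)
    · exact Or.inl (he ▸ h')
    · exact Or.inr ⟨he.trans he', myLex_trans hl hl'⟩
  · intro a b hab
    constructor
    · exact evAsymm a b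
    · intro h
      by_contra h'
      rcases lt_trichotomy (a I) (b I) with ht | ht | ht
      · exact h' (Or.inl ht)
      · rcases myLex_total hab with hl | hl
        · exact h' (Or.inr ⟨ht, hl⟩)
        · exact h (Or.inr ⟨ht.symm, hl⟩)
      · exact h (Or.inl ht)
  · rintro a b c (h | ⟨he, hl⟩) (h' | ⟨he', hl'⟩)
    · exact Or.inl (h'.trans h)
    · exact Or.inl (he' ▸ h)
    · exact Or.inl (he ▸ h')
    · exact Or.inr ⟨he.trans he', myLex_trans hl hl'⟩
  · intro a b hab
    constructor
    · exact odAsymm a b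
    · intro h
      by_contra h'
      rcases lt_trichotomy (a I) (b I) with ht | ht | ht
      · exact h (Or.inl ht)
      · rcases myLex_total hab with hl | hl
        · exact h' (Or.inr ⟨ht, hl⟩)
        · exact h (Or.inr ⟨ht.symm, hl⟩)
      · exact h' (Or.inl ht)
  · intro a b
    constructor
    · intro he
      constructor
      · rintro (h | ⟨-, hl⟩)
        · exact absurd h (he ▸ lt_irrefl _)
        · exact Or.inr ⟨he, hl⟩
      · rintro (h | ⟨-, hl⟩)
        · exact absurd h (he ▸ lt_irrefl _)
        · exact Or.inr ⟨he, hl⟩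
    · intro hiff
      by_contra hne
      rcases lt_or_gt_of_ne hne with h | h
      · rcases hiff.mp (Or.inl h) with h' | ⟨he, -⟩
        · exact absurd (h.trans h') (lt_irrefl _)
        · exact hne he
      · rcases hiff.mpr (Or.inl h) with h' | ⟨he, -⟩
        · exact absurd (h.trans h') (lt_irrefl _)
        · exact hne he
end
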